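/- Let n ≥ 2 and let r ≡ 2 (mod 4), r ≥ 2. The kernel of the epimorphism p : A_{r,n} → G_{r/2,n} equals the normal closure in A_{r,n} of the element a_1^2 = (s_0^{r/2}s_1)^2; consequently, G_{r/2,n} is isomorphic to the quotient of A_{r,n} by the normal closure of a_1^2. -/

import Mathlib

open Multiplicative

namespace ACP

/-- The action of `Sₙ` on color vectors by permuting coordinates. -/
def permAct (r n : ℕ) : Equiv.Perm (Fin n) →* MulAut (Fin n → Multiplicative (ZMod r)) where
  toFun τ :=
    { toFun := fun z => z ∘ τ.symm
      invFun := fun z => z ∘ τ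
      left_inv := fun z => by ext i; simp
      right_inv := fun z => by ext i; simp
      map_mul' := fun z w => rfl }
  map_one' := by ext z i; rfl
  map_mul' a b := by ext z i; rfl

/-- The group of colored permutations `G_{r,n} = ℤ_r ≀ Sₙ`. -/
abbrev G (r n : ℕ) : Type := (Fin n → Multiplicative (ZMod r)) ⋊[permAct r n] Equiv.Perm (Fin n)

/-- The Coxeter-like generators: `gen r n 0 = s₀` colors the digit 1 by one color,
`gen r n i = sᵢ` (for `1 ≤ i ≤ n-1`) is the adjacent transposition `(i, i+1)`. -/
def gen (r n : ℕ) (i : ℕ) : G r n :=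
  if h : 0 < i ∧ i < n then
    ⟨1, Equiv.swap ⟨i - 1, by omega⟩ ⟨i, h.2⟩⟩
  else
    ⟨fun j => if (j : ℕ) = 0 then ofAdd (1 : ZMod r) else 1, 1⟩

def zmod2ToUnits : Multiplicative (ZMod 2) →* ℤˣ where
  toFun z := (-1) ^ (toAdd z).val
  map_one' := rfl
  map_mul' := by decide

def csumHom (r n : ℕ) (hr : 2 ∣ r) :
    (Fin n → Multiplicative (ZMod r)) →* Multiplicative (ZMod 2) where
  toFun z := ofAdd (∑ i, ZMod.castHom hr (ZMod 2) (toAdd (z i)))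
  map_one' := by simp
  map_mul' z w := by
    have h : ∀ i, ZMod.castHom hr (ZMod 2) (toAdd ((z * w) i))
        = ZMod.castHom hr (ZMod 2) (toAdd (z i)) + ZMod.castHom hr (ZMod 2) (toAdd (w i)) :=
      fun i => map_add _ _ _
    simp only [h, Finset.sum_add_distrib, ofAdd_add]

/-- The sign character of `G_{r,n}` (for even `r`): sends every Coxeter-like
generator `sᵢ` to `-1`. -/
noncomputable def sgn (r n : ℕ) (hr : 2 ∣ r) : G r n →* ℤˣ :=
  SemidirectProduct.lift (zmod2ToUnits.comp (csumHom r n hr)) Equiv.Perm.sign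
    (by
      intro g
      refine MonoidHom.ext fun z => ?_
      have h1 : ∀ a x : ℤˣ, a * x * a⁻¹ = x := fun a x => by
        rw [mul_comm a x, mul_inv_cancel_right]
      simp only [MonoidHom.comp_apply, MulEquiv.coe_toMonoidHom, MulAut.conj_apply, h1]
      congr 1
      show csumHom r n hr (z ∘ g.symm) = csumHom r n hr z
      unfold csumHom
      simp only [MonoidHom.coe_mk, OneHom.coe_mk]
      congr 1
      exact Equiv.sum_comp g.symm fun j => ZMod.castHom hr (ZMod 2) (toAdd (z j)))

/-- The group of alternating colored permutations `A_{r,n}`: the kernel of the sign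
character of `G_{r,n}`. -/
noncomputable def Arn (r n : ℕ) (hr : 2 ∣ r) : Subgroup (G r n) := (sgn r n hr).ker

/-- The generators of `A_{r,n}`: `agen r n 0 = a₀ = s₀²` and
`agen r n i = aᵢ = s₀^{r/2} sᵢ` for `i ≥ 1`. -/
def agen (r n : ℕ) (i : ℕ) : G r n :=
  if i = 0 then gen r n 0 ^ 2 else gen r n 0 ^ (r / 2) * gen r n i

/-- The generating set `𝒜 = {a₀, a₁, a₁⁻¹, a₂, …, a_{n-1}}` of `A_{r,n}`. -/
def Aset (r n : ℕ) : Set (G r n) :=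
  {x | ∃ i ≤ n - 1, x = agen r n i} ∪ {(agen r n 1)⁻¹}

/-- The Coxeter-like generating set `{s₀, …, s_{n-1}}` of `G_{r,n}`. -/
def Sset (r n : ℕ) : Set (G r n) := {x | ∃ i < n, x = gen r n i}

/-- Word length of `g` with respect to a generating set `B`. -/
noncomputable def wordLength {H : Type*} [Group H] (B : Set H) (g : H) : ℕ :=
  sInf {k | ∃ w : List H, (∀ x ∈ w, x ∈ B) ∧ w.prod = g ∧ w.length = k}

/-- The element `a₁² ∈ A_{r,n}`. -/
noncomputable def a1sq (r n : ℕ) (hr : 2 ∣ r) : ↥(Arn r n hr) :=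
  ⟨agen r n 1 ^ 2, by rw [Arn, MonoidHom.mem_ker, map_pow]; exact Int.units_sq _⟩

/-- The operator `a ⊘ 2` : the residue mod `r/2` of `a/2` (`a` even) or of
`(a + r/2)/2` (`a` odd). -/
def oslash (r a : ℕ) : ℕ :=
  if a % 2 = 0 then (a / 2) % (r / 2) else ((a + r / 2) / 2) % (r / 2)

/-- `z_i(π)`, the color of digit `i+1` of `π`, as a natural number in `{0, …, r-1}`. -/
def zval (r n : ℕ) (π : G r n) (i : Fin n) : ℕ := (toAdd (π.left i)).val

/-- `csum(π) = Σ z_i(π)`. -/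
def csum (r n : ℕ) (π : G r n) : ℕ := ∑ i, zval r n π i

/-- Rank of the colored letter `b^{[c]}` (with `1 ≤ b ≤ n`, `0 ≤ c ≤ r-1`) in the
length order `n^{[r-1]} < ⋯ < 1^{[1]} < 1 < 2 < ⋯ < n`. -/
def rank (r n : ℕ) (b c : ℕ) : ℕ :=
  if c = 0 then n * (r - 1) + (b - 1) else (n - b) * (r - 1) + (r - 1 - c)

/-- Rank (in the length order) of the letter in position `i` of the window of `π`. -/
def colRank (r n : ℕ) (π : G r n) (i : Fin n) : ℕ :=
  rank r n ((π.right i : ℕ) + 1) (zval r n π (π.right i))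

/-- The inversion number of `π ∈ G_{r,n}` with respect to the length order. -/
noncomputable def inv (r n : ℕ) (π : G r n) : ℕ :=
  Nat.card {p : Fin n × Fin n // p.1 < p.2 ∧ colRank r n π p.2 < colRank r n π p.1}

/-- The ordinary inversion number of a permutation. -/
noncomputable def invPerm (n : ℕ) (τ : Equiv.Perm (Fin n)) : ℕ :=
  Nat.card {p : Fin n × Fin n // p.1 < p.2 ∧ τ p.2 < τ p.1}

/-- The covering map `p : A_{r,n} → G_{r/2,n}`, `p(z, τ) = ((zᵢ ⊘ 2)ᵢ, τ)`. -/
def pmap (r n : ℕ) (π : G r n) : G (r / 2) n :=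
  ⟨fun i => ofAdd ((oslash r (zval r n π i) : ZMod (r / 2))), π.right⟩

/-- The section `s : G_{r/2,n} → A_{r,n}`: doubles all colors (mod `r`), adding `r/2`
to the color of the digit `1` when `inv(|π|)` is odd. -/
noncomputable def smap (r n : ℕ) (π : G (r / 2) n) : G r n :=
  ⟨fun d => ofAdd
      (((2 * zval (r / 2) n π d +
        if (d : ℕ) = 0 ∧ invPerm n π.right % 2 = 1 then r / 2 else 0 : ℕ) : ZMod r)),
   π.right⟩

/-- `c(π) = Σ_{i : z_i(π) ≠ 0} (i - 1)` (digits are `1`-based). -/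
def cstat (r n : ℕ) (π : G r n) : ℕ :=
  ∑ i : Fin n, if zval r n π i ≠ 0 then (i : ℕ) else 0

/-- The number of absolute transparent inversions of `π`. -/
noncomputable def tinv (r n : ℕ) (π : G r n) : ℕ :=
  Nat.card {p : Fin n × Fin n //
    zval r n π p.1 = r / 2 ∧ p.2 < p.1 ∧ π.right⁻¹ p.1 < π.right⁻¹ p.2}

/-- The (digit-indexed) Lehmer code `l_i = #{j : j > i, τ⁻¹(i) > τ⁻¹(j)}`. -/
noncomputable def lehmer (n : ℕ) (τ : Equiv.Perm (Fin n)) (i : Fin n) : ℕ :=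
  Nat.card {j : Fin n // i < j ∧ τ⁻¹ j < τ⁻¹ i}


/-- `μ(π)`: the minimum of `β(ω) + n(ω)` over all factorizations
`ω = b₀ s₀^{i₁} b₁ ⋯ s₀^{i_{k+1}} b_{k+1}` of `π`, where each `b_u` is a word in
`s₁, …, s_{n-1}` only, `n(ω)` is the number of letters `sᵢ` with `i ≠ 0`, and
`β(ω) = Σ_u (i_u ⊘ 2)`. -/
noncomputable def mu (r n : ℕ) (π : G r n) : ℕ :=
  sInf {m | ∃ (b₀ : List ℕ) (L : List (ℕ × List ℕ)),
    (∀ x ∈ b₀, 1 ≤ x ∧ x ≤ n - 1) ∧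
    (∀ q ∈ L, ∀ x ∈ q.2, 1 ≤ x ∧ x ≤ n - 1) ∧
    π = (b₀.map (gen r n)).prod *
        (L.map (fun q => gen r n 0 ^ q.1 * (q.2.map (gen r n)).prod)).prod ∧
    m = (L.map (fun q => oslash r q.1)).sum +
        (b₀.length + (L.map (fun q => q.2.length)).sum)}

/-- The flag-inversion number on `A_{r,n}`:
`finv_A(π) = (r/2)·inv(|π|) + Σᵢ (cᵢ(π) ⊘ 2)` where `cᵢ(π) = r - zᵢ(π⁻¹) (mod r)`. -/
noncomputable def finvA (r n : ℕ) (π : G r n) : ℕ :=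
  (r / 2) * invPerm n π.right + ∑ i, oslash r ((r - zval r n π⁻¹ i) % r)

/-- The number of (colored) right-to-left minima of `π` whose color is not in `{0, r/2}`. -/
noncomputable def rtlMinA (r n : ℕ) (π : G r n) : ℕ :=
  Nat.card {i : Fin n // (∀ j : Fin n, i < j → π.right i < π.right j) ∧
    zval r n π (π.right i) ≠ 0 ∧ zval r n π (π.right i) ≠ r / 2}

/-- The defining relators of the Coxeter-like presentation of `A_{r,n}` on generators
`x₀, …, x_{n-1}`. -/
def rels (r n : ℕ) : Set (FreeGroup (Fin n)) :=
  {w | ∃ i : Fin n, (i : ℕ) = 0 ∧ w = FreeGroup.of i ^ (r / 2)} ∪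
  {w | ∃ i : Fin n, (i : ℕ) = 1 ∧ w = FreeGroup.of i ^ 4} ∪
  {w | ∃ i : Fin n, 2 ≤ (i : ℕ) ∧ w = FreeGroup.of i ^ 2} ∪
  {w | ∃ i j : Fin n, (i : ℕ) ≠ 1 ∧ (j : ℕ) ≠ 1 ∧ (i : ℕ) + 1 < (j : ℕ) ∧
    w = FreeGroup.of i * FreeGroup.of j * (FreeGroup.of i)⁻¹ * (FreeGroup.of j)⁻¹} ∪
  {w | ∃ i j : Fin n, 1 ≤ (i : ℕ) ∧ (j : ℕ) = (i : ℕ) + 1 ∧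
    w = (FreeGroup.of i * FreeGroup.of j) ^ 3} ∪
  {w | ∃ i j : Fin n, (i : ℕ) = 0 ∧ (j : ℕ) = 1 ∧
    w = (FreeGroup.of i * FreeGroup.of j) ^ (2 * r)} ∪
  {w | ∃ i j : Fin n, (i : ℕ) = 0 ∧ (j : ℕ) = 1 ∧
    w = (FreeGroup.of i * (FreeGroup.of j)⁻¹) ^ (2 * r)} ∪
  {w | ∃ i j : Fin n, (i : ℕ) = 0 ∧ (j : ℕ) = 1 ∧
    w = FreeGroup.of i * FreeGroup.of j ^ 2 * (FreeGroup.of i)⁻¹ * (FreeGroup.of j ^ 2)⁻¹} ∪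
  {w | ∃ i j : Fin n, (i : ℕ) = 1 ∧ 2 < (j : ℕ) ∧
    w = FreeGroup.of i * FreeGroup.of j * FreeGroup.of i * (FreeGroup.of j)⁻¹}

theorem two_dvd_of_mod_four (r : ℕ) (hr : r % 4 = 2) : 2 ∣ r := by omega

end ACP

/-! Since `r/2` is odd, `a ↦ a ⊘ 2` is the additive map `ℤ/r → ℤ/(r/2)` "reduce mod `r/2`, then
divide by `2`", so `p` is the restriction to `A_{r,n}` of a surjective homomorphism
`G_{r,n} → G_{r/2,n}` whose kernel consists of the pure color vectors with entries in `{0, r/2}`.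
Write `eᵢ` for the vector with the single entry `r/2` at `i`; it has sign `-1` and `p(eᵢ) = 1`.
Multiplying by `e₀` where needed, every element of `G_{r,n}` can be moved into `A_{r,n}` without
changing its permutation or its image under `p`; this gives surjectivity, and shows that every
`e₀eᵢ` is conjugate in `A_{r,n}` to `a₁² = e₀e₁`. A kernel element of `A_{r,n}` has an even number
of entries `r/2`, so it is a product of such `e₀eᵢ`. -/

open SemidirectProduct

namespace ACP

variable {r n : ℕ}

lemma two_mul_oslash_val (hr : r % 4 = 2) (z : ZMod r) :
    (2 : ZMod (r / 2)) * (oslash r z.val : ZMod (r / 2)) = ZMod.cast z := by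
  have : NeZero r := ⟨by omega⟩
  have hmod (b : ℕ) :
      ((2 * (b % (r / 2)) : ℕ) : ZMod (r / 2)) = ((2 * b : ℕ) : ZMod (r / 2)) := by
    rw [Nat.cast_mul, Nat.cast_mul, ZMod.natCast_mod]
  rw [← ZMod.natCast_val]
  suffices ((2 * oslash r z.val : ℕ) : ZMod (r / 2)) = z.val by simpa using this
  rw [oslash]
  split_ifs with hz
  · rw [hmod, Nat.mul_div_cancel' (Nat.dvd_of_mod_eq_zero hz)]
  · rw [hmod, Nat.mul_div_cancel' (by omega), Nat.cast_add, ZMod.natCast_self, add_zero]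

lemma isUnit_two_zmod_half (hr : r % 4 = 2) : IsUnit (2 : ZMod (r / 2)) := by
  have : NeZero (r / 2) := ⟨by omega⟩
  simpa using (ZMod.isUnit_iff_coprime 2 (r / 2)).mpr
    (Nat.coprime_two_left.mpr (Nat.odd_iff.mpr (by omega)))

/-- `a ↦ a ⊘ 2`, which is division by the unit `2` of `ℤ/(r/2)` after reduction mod `r/2`. -/
def halfColor (hr : r % 4 = 2) : ZMod r →+ ZMod (r / 2) where
  toFun z := oslash r z.val
  map_zero' := by simp [oslash]
  map_add' x y := (isUnit_two_zmod_half hr).mul_left_cancel <| by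
    rw [mul_add, two_mul_oslash_val hr, two_mul_oslash_val hr, two_mul_oslash_val hr,
      ZMod.cast_add (Nat.div_dvd_of_dvd (two_dvd_of_mod_four r hr))]

lemma two_mul_halfColor (hr : r % 4 = 2) (z : ZMod r) :
    2 * halfColor hr z = ZMod.cast z :=
  two_mul_oslash_val hr z

lemma halfColor_surjective (hr : r % 4 = 2) : Function.Surjective (halfColor hr) := by
  intro w
  obtain ⟨z, hz⟩ :=
    ZMod.castHom_surjective (Nat.div_dvd_of_dvd (two_dvd_of_mod_four r hr)) (2 * w)
  exact ⟨z, (isUnit_two_zmod_half hr).mul_left_cancel (by rw [two_mul_halfColor, ← hz]; rfl)⟩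

lemma halfColor_eq_zero_iff (hr : r % 4 = 2) (z : ZMod r) :
    halfColor hr z = 0 ↔ z = 0 ∨ z = ((r / 2 : ℕ) : ZMod r) := by
  have : NeZero r := ⟨by omega⟩
  rw [← (isUnit_two_zmod_half hr).mul_right_eq_zero, two_mul_halfColor, ← ZMod.natCast_val,
    ZMod.natCast_eq_zero_iff]
  constructor
  · rintro ⟨k, hk⟩
    have hk2 : k < 2 := by
      have := ZMod.val_lt z
      have : r = 2 * (r / 2) := by omega
      by_contra
      nlinarith
    interval_cases k
    · left; simpa using hk
    · right; rw [← ZMod.natCast_zmod_val z, hk, mul_one]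
  · rintro (rfl | rfl)
    · simp
    · rw [ZMod.val_natCast, Nat.mod_eq_of_lt (by omega)]

/-- `(⊘ 2, mod 2) : ℤ/r → ℤ/(r/2) × ℤ/2` is the Chinese remainder isomorphism. -/
lemma eq_zero_of_halfColor_eq_zero (hr : r % 4 = 2) {z : ZMod r} (hz : halfColor hr z = 0)
    (hz₂ : ZMod.castHom (two_dvd_of_mod_four r hr) (ZMod 2) z = 0) : z = 0 := by
  refine ((halfColor_eq_zero_iff hr z).1 hz).resolve_right ?_
  rintro rfl
  rw [map_natCast, ZMod.natCast_eq_zero_iff] at hz₂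
  omega

lemma eq_prod_mulSingle_mul_mulSingle_inv {ι M : Type*} [Fintype ι] [DecidableEq ι] [CommGroup M]
    (z : ι → M) (hz : ∏ i, z i = 1) (i₀ : ι) :
    z = ∏ i, Pi.mulSingle i₀ (z i)⁻¹ * Pi.mulSingle i (z i) := by
  have hsingle : ∏ i, (Pi.mulSingle i₀ (z i)⁻¹ : ι → M) = Pi.mulSingle i₀ (∏ i, z i)⁻¹ := by
    rw [← Finset.prod_inv_distrib]
    exact (map_prod (MonoidHom.mulSingle (fun _ : ι => M) i₀) (fun i => (z i)⁻¹) _).symm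
  rw [Finset.prod_mul_distrib, Finset.univ_prod_mulSingle, hsingle, hz, inv_one,
    Pi.mulSingle_one, one_mul]

def pHom (hr : r % 4 = 2) : G r n →* G (r / 2) n :=
  SemidirectProduct.map ((AddMonoidHom.toMultiplicative (halfColor hr)).compLeft (Fin n))
    (MonoidHom.id _) fun _ => rfl

lemma pHom_apply (hr : r % 4 = 2) (π : G r n) : pHom hr π = pmap r n π := rfl

lemma pHom_eq_one_iff (hr : r % 4 = 2) (x : G r n) :
    pHom hr x = 1 ↔ x.right = 1 ∧ ∀ i, halfColor hr (toAdd (x.left i)) = 0 := by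
  rw [SemidirectProduct.ext_iff, funext_iff, and_comm]
  rfl

lemma pHom_surjective (hr : r % 4 = 2) : Function.Surjective (pHom (n := n) hr) := by
  intro y
  choose z hz using fun i => halfColor_surjective hr (toAdd (y.left i))
  exact ⟨⟨fun i => ofAdd (z i), y.right⟩, SemidirectProduct.ext (funext hz) rfl⟩

lemma permAct_mulSingle (τ : Equiv.Perm (Fin n)) (i : Fin n) (c : Multiplicative (ZMod r)) :
    permAct r n τ (Pi.mulSingle i c) = Pi.mulSingle (τ i) c := by
  show Pi.mulSingle i c ∘ τ.symm = _
  rw [Pi.mulSingle_comp_equiv, Equiv.symm_symm]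

lemma conj_inl (c : G r n) (z : Fin n → Multiplicative (ZMod r)) :
    c * inl z * c⁻¹ = inl (permAct r n c.right z) := by
  refine SemidirectProduct.ext ?_ ?_
  · simp only [mul_left, mul_right, inv_left, left_inl, right_inl, mul_one]
    rw [← MulAut.mul_apply, ← map_mul, mul_inv_cancel, map_one, MulAut.one_apply,
      mul_comm c.left, mul_inv_cancel_right]
  · simp

def halfTurn (r n : ℕ) (i : Fin n) : G r n :=
  inl (Pi.mulSingle i (ofAdd ((r / 2 : ℕ) : ZMod r)))

lemma conj_halfTurn (c : G r n) (i : Fin n) :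
    c * halfTurn r n i * c⁻¹ = halfTurn r n (c.right i) := by
  rw [halfTurn, conj_inl, permAct_mulSingle, halfTurn]

lemma halfTurn_mul_self (hr : r % 4 = 2) (i : Fin n) : halfTurn r n i * halfTurn r n i = 1 := by
  rw [halfTurn, ← map_mul, ← Pi.mulSingle_mul, ← ofAdd_add, ← Nat.cast_add,
    show r / 2 + r / 2 = r by omega, ZMod.natCast_self, ofAdd_zero, Pi.mulSingle_one, map_one]

lemma pHom_halfTurn (hr : r % 4 = 2) (i : Fin n) : pHom hr (halfTurn r n i) = 1 := by
  refine (pHom_eq_one_iff hr _).2 ⟨rfl, fun j => ?_⟩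
  rw [halfTurn, left_inl, halfColor_eq_zero_iff]
  by_cases hj : j = i
  · subst hj; simp
  · simp [Pi.mulSingle_eq_of_ne hj]

lemma sgn_inl (h2 : 2 ∣ r) (z : Fin n → Multiplicative (ZMod r)) :
    sgn r n h2 (inl z) = zmod2ToUnits (csumHom r n h2 z) :=
  lift_inl _ _ _ z

lemma inl_mem_Arn_iff (h2 : 2 ∣ r) (z : Fin n → Multiplicative (ZMod r)) :
    inl z ∈ Arn r n h2 ↔ ∑ i, ZMod.castHom h2 (ZMod 2) (toAdd (z i)) = 0 := by
  rw [Arn, MonoidHom.mem_ker, sgn_inl]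
  exact (by decide : ∀ a : ZMod 2, zmod2ToUnits (ofAdd a) = 1 ↔ a = 0) _

lemma sgn_halfTurn (hr : r % 4 = 2) (i : Fin n) :
    sgn r n (two_dvd_of_mod_four r hr) (halfTurn r n i) = -1 := by
  have hcsum : csumHom r n (two_dvd_of_mod_four r hr)
      (Pi.mulSingle i (ofAdd ((r / 2 : ℕ) : ZMod r))) = ofAdd 1 := by
    simp only [csumHom, MonoidHom.coe_mk, OneHom.coe_mk]
    rw [Finset.sum_eq_single i (fun j _ hj => by simp [Pi.mulSingle_eq_of_ne hj]) (by simp)]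
    rw [Pi.mulSingle_eq_same, toAdd_ofAdd, map_natCast, ← ZMod.natCast_mod,
      show r / 2 % 2 = 1 by omega, Nat.cast_one]
  rw [halfTurn, sgn_inl, hcsum]
  decide

lemma exists_mem_Arn_pHom_eq (hr : r % 4 = 2) (hn : 0 < n) (x : G r n) :
    ∃ c ∈ Arn r n (two_dvd_of_mod_four r hr), pHom hr c = pHom hr x ∧ c.right = x.right := by
  rcases Int.units_eq_one_or (sgn r n (two_dvd_of_mod_four r hr) x) with hx | hx
  · exact ⟨x, hx, rfl, rfl⟩
  · refine ⟨halfTurn r n ⟨0, hn⟩ * x, ?_, ?_, ?_⟩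
    · rw [Arn, MonoidHom.mem_ker, map_mul, sgn_halfTurn hr, hx]
      rfl
    · rw [map_mul, pHom_halfTurn, one_mul]
    · rw [mul_right, halfTurn, right_inl, one_mul]

lemma gen_zero (hn : 0 < n) :
    gen r n 0 = inl (Pi.mulSingle (⟨0, hn⟩ : Fin n) (ofAdd (1 : ZMod r))) := by
  rw [gen, dif_neg (by omega)]
  congr
  funext j
  simp [Pi.mulSingle_apply, Fin.ext_iff]

lemma gen_one (hn : 1 < n) : gen r n 1 = inr (Equiv.swap ⟨0, by omega⟩ ⟨1, hn⟩) := by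
  rw [gen, dif_pos ⟨Nat.one_pos, hn⟩]
  rfl

lemma a1sq_eq (h2 : 2 ∣ r) (hn : 1 < n) :
    (a1sq r n h2 : G r n) = halfTurn r n ⟨0, by omega⟩ * halfTurn r n ⟨1, hn⟩ := by
  have hpow : gen r n 0 ^ (r / 2) = halfTurn r n ⟨0, by omega⟩ := by
    rw [gen_zero (by omega), ← map_pow, ← Pi.mulSingle_pow, ← ofAdd_nsmul, nsmul_one, halfTurn]
  show (gen r n 0 ^ (r / 2) * gen r n 1) ^ 2 = _
  rw [hpow, gen_one hn]
  set σ : G r n := inr (Equiv.swap ⟨0, by omega⟩ ⟨1, hn⟩)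
  set h₀ := halfTurn r n ⟨0, by omega⟩
  have hσ : σ ^ 2 = 1 := by
    rw [← map_pow (inr : Equiv.Perm (Fin n) →* G r n), sq, Equiv.swap_mul_self, map_one]
  calc (h₀ * σ) ^ 2 = h₀ * (σ * h₀ * σ⁻¹) * σ ^ 2 := by
        simp only [sq, mul_assoc, inv_mul_cancel_left]
    _ = _ := by
        rw [conj_halfTurn, hσ, mul_one]
        simp [σ]

lemma halfTurn_mul_halfTurn_mem (hr : r % 4 = 2) (hn : 1 < n) (i : Fin n) :
    halfTurn r n ⟨0, by omega⟩ * halfTurn r n i ∈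
      (Subgroup.normalClosure {a1sq r n (two_dvd_of_mod_four r hr)}).map
        (Arn r n (two_dvd_of_mod_four r hr)).subtype := by
  by_cases hi : i = ⟨0, by omega⟩
  · rw [hi, halfTurn_mul_self hr]
    exact one_mem _
  obtain ⟨c, hc, -, hcr⟩ := exists_mem_Arn_pHom_eq hr (by omega) (inr (Equiv.swap ⟨1, hn⟩ i))
  refine ⟨⟨c, hc⟩ * a1sq r n _ * ⟨c, hc⟩⁻¹, ?_, ?_⟩
  · exact Subgroup.normalClosure_normal.conj_mem _
      (Subgroup.subset_normalClosure (Set.mem_singleton _)) _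
  have hswap₀ : Equiv.swap ⟨1, hn⟩ i ⟨0, by omega⟩ = ⟨0, by omega⟩ :=
    Equiv.swap_apply_of_ne_of_ne (by simp [Fin.ext_iff]) (Ne.symm hi)
  show c * (a1sq r n _ : G r n) * c⁻¹ = _
  rw [a1sq_eq _ hn, ← conj_mul, conj_halfTurn, conj_halfTurn, hcr, right_inr, hswap₀,
    Equiv.swap_apply_left]

lemma mem_normalClosure_of_pHom_eq_one (hr : r % 4 = 2) (hn : 1 < n)
    (x : Arn r n (two_dvd_of_mod_four r hr)) (hx : pHom hr (x : G r n) = 1) :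
    x ∈ Subgroup.normalClosure {a1sq r n (two_dvd_of_mod_four r hr)} := by
  obtain ⟨hright, hcolor⟩ := (pHom_eq_one_iff hr _).1 hx
  set z := (x : G r n).left
  have hx_eq : (x : G r n) = inl z := by
    rw [← inl_left_mul_inr_right (x : G r n), hright, map_one, mul_one]
  have hprod : ∏ i, z i = 1 := by
    rw [← ofAdd_toAdd (∏ i, z i), toAdd_prod]
    refine congrArg ofAdd (eq_zero_of_halfColor_eq_zero hr ?_ ?_)
    · rw [map_sum]
      exact Finset.sum_eq_zero fun i _ => hcolor i
    · rw [map_sum, ← inl_mem_Arn_iff, ← hx_eq]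
      exact x.2
  rw [← Subgroup.mem_map_iff_mem (Arn r n _).subtype_injective, Subgroup.coe_subtype, hx_eq,
    ← Subgroup.mem_comap, eq_prod_mulSingle_mul_mulSingle_inv z hprod ⟨0, by omega⟩]
  refine Subgroup.prod_mem _ fun i _ => ?_
  rw [Subgroup.mem_comap]
  rcases (halfColor_eq_zero_iff hr _).1 (hcolor i) with hzi | hzi
  · rw [show z i = 1 from hzi, inv_one, Pi.mulSingle_one, Pi.mulSingle_one, mul_one, map_one]
    exact one_mem _
  · rw [show z i = ofAdd ((r / 2 : ℕ) : ZMod r) from hzi, map_mul, Pi.mulSingle_inv, map_inv]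
    rw [← halfTurn, ← halfTurn, inv_eq_of_mul_eq_one_right (halfTurn_mul_self hr _)]
    exact halfTurn_mul_halfTurn_mem hr hn i

lemma pHom_a1sq (hr : r % 4 = 2) (hn : 1 < n) :
    pHom hr (a1sq r n (two_dvd_of_mod_four r hr) : G r n) = 1 := by
  rw [a1sq_eq _ hn, map_mul, pHom_halfTurn hr, pHom_halfTurn hr, mul_one]

end ACP

theorem ker_pmap_eq_normalClosure (r n : ℕ) (hn : 2 ≤ n) (hr : r % 4 = 2) :
    ({x : ↥(ACP.Arn r n (ACP.two_dvd_of_mod_four r hr)) | ACP.pmap r n (x : ACP.G r n) = 1} =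
      (Subgroup.normalClosure {ACP.a1sq r n (ACP.two_dvd_of_mod_four r hr)} :
        Set ↥(ACP.Arn r n (ACP.two_dvd_of_mod_four r hr)))) ∧
    Nonempty (ACP.G (r / 2) n ≃*
      ↥(ACP.Arn r n (ACP.two_dvd_of_mod_four r hr)) ⧸ Subgroup.normalClosure {ACP.a1sq r n (ACP.two_dvd_of_mod_four r hr)}) := by
  set A := ACP.Arn r n (ACP.two_dvd_of_mod_four r hr)
  set p : A →* ACP.G (r / 2) n := (ACP.pHom hr).comp A.subtype
  have hker : p.ker = Subgroup.normalClosure {ACP.a1sq r n (ACP.two_dvd_of_mod_four r hr)} :=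
    le_antisymm (fun x hx => ACP.mem_normalClosure_of_pHom_eq_one hr hn x hx)
      (Subgroup.normalClosure_le_normal (Set.singleton_subset_iff.2 (ACP.pHom_a1sq hr hn)))
  have hsurj : Function.Surjective p := fun y => by
    obtain ⟨x, rfl⟩ := ACP.pHom_surjective hr y
    obtain ⟨c, hc, hcx, -⟩ := ACP.exists_mem_Arn_pHom_eq hr (by omega) x
    exact ⟨⟨c, hc⟩, hcx⟩
  refine ⟨?_, ⟨(QuotientGroup.quotientKerEquivOfSurjective p hsurj).symm.trans
    (QuotientGroup.quotientMulEquivOfEq hker)⟩⟩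
  ext x
  rw [Set.mem_ofPred_eq, ← ACP.pHom_apply hr, SetLike.mem_coe, ← hker]
  rfl
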